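/- arXiv:math/0108005 — 4 statements merged into one kernel-verified Lean document; each statement's English description precedes it below -/
import Mathlib

section
/- Let X be a compact topological space with a distinguished point e and a regular Borel probability measure dx of full support. Let g be a continuous function on X with 0 ≤ g ≤ 1, g(e) = 1, and g(x) < 1 for all x ≠ e. Then the probability measures with densities gⁿ/‖gⁿ‖₁ converge weak-* to the Dirac measure at e; that is, for every continuous function f on X, ∫ f(x) gⁿ(x) dx / ∫ gⁿ(x) dx → f(e) as n → ∞. -/
/-!
Write `Aₙ = ∫ f gⁿ / ∫ gⁿ`. Given `ε > 0`, let `U` be the open set where `|f - f e| < ε`.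
On the compact set `Uᶜ` the function `g` is bounded by some `c < 1`, while on the open
neighbourhood `V = {b < g}` of `e` (with `c < b < 1`) it exceeds `b`; since `V` has positive
measure, `∫_{Uᶜ} gⁿ / ∫ gⁿ ≤ C (c / b)ⁿ → 0`. Hence the weights `gⁿ / ∫ gⁿ` concentrate on `U`,
and `|Aₙ - f e| ≤ ε + sup |f - f e| · ∫_{Uᶜ} gⁿ / ∫ gⁿ`.
-/

open MeasureTheory Filter Topology

lemma IsCompact.exists_lt_forall_le {X : Type*} [TopologicalSpace X] {K : Set X}
    (hK : IsCompact K) {g : X → ℝ} (hg : ContinuousOn g K) {a : ℝ} (h : ∀ x ∈ K, g x < a) :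
    ∃ c < a, ∀ x ∈ K, g x ≤ c := by
  rcases K.eq_empty_or_nonempty with rfl | hne
  · exact ⟨a - 1, by linarith, by simp⟩
  · obtain ⟨x₀, hx₀, hmax⟩ := hK.exists_isMaxOn hne hg
    exact ⟨g x₀, h x₀ hx₀, fun x hx => hmax hx⟩

lemma abs_integral_mul_div_integral_sub_le {α : Type*} [MeasurableSpace α] {μ : Measure α}
    {f w : α → ℝ} {a δ M : ℝ} {U : Set α} (hf : AEStronglyMeasurable f μ)
    (hw : Integrable w μ) (hw0 : 0 ≤ w) (hw_pos : 0 < ∫ x, w x ∂μ) (hU : MeasurableSet U)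
    (hδ : 0 ≤ δ) (hfU : ∀ x ∈ U, |f x - a| ≤ δ) (hM : ∀ x, |f x - a| ≤ M) :
    |(∫ x, f x * w x ∂μ) / (∫ x, w x ∂μ) - a|
      ≤ δ + M * ((∫ x in Uᶜ, w x ∂μ) / ∫ x, w x ∂μ) := by
  have hfa : AEStronglyMeasurable (fun x => f x - a) μ := hf.sub aestronglyMeasurable_const
  have hfa_int : Integrable (fun x => (f x - a) * w x) μ := hw.bdd_mul hfa (ae_of_all _ hM)
  have habs_int : Integrable (fun x => |f x - a| * w x) μ :=
    hw.bdd_mul hfa.norm (ae_of_all _ fun x => by simpa using hM x)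
  have hnum : (∫ x, f x * w x ∂μ) - a * ∫ x, w x ∂μ = ∫ x, (f x - a) * w x ∂μ := by
    have hf_int : Integrable (fun x => f x * w x) μ :=
      (hfa_int.add (hw.const_mul a)).congr (ae_of_all _ fun x => by simp only [Pi.add_apply]; ring)
    rw [← integral_const_mul, ← integral_sub hf_int (hw.const_mul a)]
    simp only [sub_mul]
  have hU_part : ∫ x in U, |f x - a| * w x ∂μ ≤ δ * ∫ x, w x ∂μ :=
    calc ∫ x in U, |f x - a| * w x ∂μ ≤ ∫ x in U, δ * w x ∂μ :=
          setIntegral_mono_on habs_int.integrableOn (hw.const_mul δ).integrableOn hU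
            fun x hx => mul_le_mul_of_nonneg_right (hfU x hx) (hw0 x)
      _ ≤ δ * ∫ x, w x ∂μ := by
          rw [integral_const_mul]
          exact mul_le_mul_of_nonneg_left (setIntegral_le_integral hw (ae_of_all _ hw0)) hδ
  have hUc_part : ∫ x in Uᶜ, |f x - a| * w x ∂μ ≤ M * ∫ x in Uᶜ, w x ∂μ := by
    rw [← integral_const_mul]
    exact setIntegral_mono habs_int.integrableOn (hw.const_mul M).integrableOn
      fun x => mul_le_mul_of_nonneg_right (hM x) (hw0 x)
  calc |(∫ x, f x * w x ∂μ) / (∫ x, w x ∂μ) - a|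
      = |∫ x, (f x - a) * w x ∂μ| / ∫ x, w x ∂μ := by
        rw [← hnum, div_sub' hw_pos.ne', abs_div, abs_of_pos hw_pos, mul_comm]
    _ ≤ (∫ x, |f x - a| * w x ∂μ) / ∫ x, w x ∂μ := by
        gcongr
        refine (abs_integral_le_integral_abs).trans_eq (integral_congr_ae (ae_of_all _ ?_))
        intro x
        simp only [abs_mul, abs_of_nonneg (hw0 x)]
    _ ≤ (δ * ∫ x, w x ∂μ + M * ∫ x in Uᶜ, w x ∂μ) / ∫ x, w x ∂μ := by
        rw [← integral_add_compl hU habs_int]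
        gcongr
    _ = δ + M * ((∫ x in Uᶜ, w x ∂μ) / ∫ x, w x ∂μ) := by
        field_simp

theorem tendsto_setIntegral_compl_pow_div_integral_pow {X : Type*} [TopologicalSpace X]
    [CompactSpace X] [MeasurableSpace X] [OpensMeasurableSpace X] (μ : Measure X)
    [IsFiniteMeasure μ] [μ.IsOpenPosMeasure] {e : X} {g : X → ℝ} (hg : Continuous g)
    (hg0 : ∀ x, 0 ≤ g x) (hge : g e = 1) (hlt : ∀ x, x ≠ e → g x < 1) {U : Set X}
    (hU : IsOpen U) (heU : e ∈ U) :
    Tendsto (fun n : ℕ => (∫ x in Uᶜ, g x ^ n ∂μ) / ∫ x, g x ^ n ∂μ) atTop (𝓝 0) := by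
  obtain ⟨c, hc1, hc⟩ := hU.isClosed_compl.isCompact.exists_lt_forall_le hg.continuousOn
    fun x hx => hlt x (ne_of_mem_of_not_mem heU hx).symm
  set c₀ := max c 0
  obtain ⟨b, hc₀b, hb1⟩ := exists_between (max_lt hc1 one_pos : c₀ < 1)
  have hb0 : 0 < b := (le_max_right c 0).trans_lt hc₀b
  set V := {x | b < g x}
  have hV : 0 < μ.real V :=
    ENNReal.toReal_pos ((isOpen_lt continuous_const hg).measure_pos μ ⟨e, by simp [hge, hb1]⟩).ne'
      (measure_ne_top μ V)
  have hint (n : ℕ) : Integrable (fun x => g x ^ n) μ :=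
    (hg.pow n).integrable_of_hasCompactSupport (.of_compactSpace _)
  have hlower (n : ℕ) : b ^ n * μ.real V ≤ ∫ x, g x ^ n ∂μ :=
    (setIntegral_ge_of_const_le_real (measurableSet_lt measurable_const hg.measurable)
      (measure_ne_top μ V) (fun x hx => pow_le_pow_left₀ hb0.le (le_of_lt hx) n)
      (hint n).integrableOn).trans
      (setIntegral_le_integral (hint n) (ae_of_all _ fun x => pow_nonneg (hg0 x) n))
  have hupper (n : ℕ) : ∫ x in Uᶜ, g x ^ n ∂μ ≤ c₀ ^ n * μ.real Uᶜ := by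
    refine (Real.le_norm_self _).trans (norm_setIntegral_le_of_norm_le_const (measure_lt_top μ _) ?_)
    intro x hx
    rw [Real.norm_eq_abs, abs_of_nonneg (pow_nonneg (hg0 x) n)]
    exact pow_le_pow_left₀ (hg0 x) ((hc x hx).trans (le_max_left c 0)) n
  have hratio (n : ℕ) : (∫ x in Uᶜ, g x ^ n ∂μ) / ∫ x, g x ^ n ∂μ
      ≤ μ.real Uᶜ / μ.real V * (c₀ / b) ^ n :=
    calc (∫ x in Uᶜ, g x ^ n ∂μ) / ∫ x, g x ^ n ∂μ ≤ c₀ ^ n * μ.real Uᶜ / (b ^ n * μ.real V) :=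
          div_le_div₀ (by positivity) (hupper n) (by positivity) (hlower n)
      _ = μ.real Uᶜ / μ.real V * (c₀ / b) ^ n := by
          rw [div_pow]
          field_simp
  have hgeom : Tendsto (fun n : ℕ => μ.real Uᶜ / μ.real V * (c₀ / b) ^ n) atTop (𝓝 0) := by
    simpa using (tendsto_pow_atTop_nhds_zero_of_lt_one (by positivity)
      ((div_lt_one hb0).2 hc₀b)).const_mul (μ.real Uᶜ / μ.real V)
  refine squeeze_zero (fun n => div_nonneg ?_ ?_) hratio hgeom
  · exact setIntegral_nonneg hU.measurableSet.compl fun x _ => pow_nonneg (hg0 x) n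
  · exact integral_nonneg fun x => pow_nonneg (hg0 x) n

theorem stmt_0_general {X : Type*} [TopologicalSpace X] [CompactSpace X]
    [MeasurableSpace X] [BorelSpace X]
    (μ : Measure X) [IsProbabilityMeasure μ] [μ.IsOpenPosMeasure]
    (e : X) (g : X → ℝ) (hg : Continuous g)
    (hg0 : ∀ x, 0 ≤ g x)
    (hge : g e = 1) (hlt : ∀ x, x ≠ e → g x < 1)
    (f : X → ℝ) (hf : Continuous f) :
    Tendsto (fun n : ℕ => (∫ x, f x * g x ^ n ∂μ) / ∫ x, g x ^ n ∂μ)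
      atTop (nhds (f e)) := by
  rw [Metric.tendsto_nhds]
  intro ε hε
  obtain ⟨M, hM⟩ := isCompact_univ.exists_bound_of_continuousOn
    (f := fun x => f x - f e) (hf.sub continuous_const).continuousOn
  set U := {x | |f x - f e| < ε / 2}
  have hU : IsOpen U := isOpen_lt (hf.sub continuous_const).abs continuous_const
  have hconc := tendsto_setIntegral_compl_pow_div_integral_pow μ hg hg0 hge hlt hU
    (by simpa [U] using half_pos hε)
  filter_upwards [(hconc.const_mul M).eventually (gt_mem_nhds (by rw [mul_zero]; exact half_pos hε))]
    with n hn
  have hpos : 0 < ∫ x, g x ^ n ∂μ :=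
    (hg.pow n).integral_pos_of_hasCompactSupport_nonneg_nonzero (.of_compactSpace _)
      (fun x => pow_nonneg (hg0 x) n) (x := e) (by simp [hge])
  rw [Real.dist_eq]
  calc _ ≤ ε / 2 + M * ((∫ x in Uᶜ, g x ^ n ∂μ) / ∫ x, g x ^ n ∂μ) :=
        abs_integral_mul_div_integral_sub_le hf.aestronglyMeasurable
          ((hg.pow n).integrable_of_hasCompactSupport (.of_compactSpace _))
          (fun x => pow_nonneg (hg0 x) n) hpos hU.measurableSet (half_pos hε).le
          (fun x hx => le_of_lt hx) (fun x => by simpa using hM x (Set.mem_univ x))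
    _ < ε := by linarith

/-- On a compact space with a fully supported regular Borel probability
measure, if `0 ≤ g ≤ 1`, `g e = 1` and `g x < 1` for `x ≠ e`, then the probability measures
with densities `g^n / ‖g^n‖₁` converge weak-* to the Dirac measure at `e`. -/
theorem stmt_0 {X : Type*} [TopologicalSpace X] [CompactSpace X] [T2Space X]
    [MeasurableSpace X] [BorelSpace X]
    (μ : Measure X) [IsProbabilityMeasure μ] [μ.Regular] [μ.IsOpenPosMeasure]
    (e : X) (g : X → ℝ) (hg : Continuous g)
    (hg0 : ∀ x, 0 ≤ g x) (hg1 : ∀ x, g x ≤ 1)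
    (hge : g e = 1) (hlt : ∀ x, x ≠ e → g x < 1)
    (f : X → ℝ) (hf : Continuous f) :
    Tendsto (fun n : ℕ => (∫ x, f x * g x ^ n ∂μ) / ∫ x, g x ^ n ∂μ)
      atTop (nhds (f e)) :=
  stmt_0_general μ e g hg hg0 hge hlt f hf
end

section
/- Let G be a compact group acting ergodically by α on a unital C*-algebra B (the only invariant elements are scalars), with continuous length function ℓ and seminorm L(T) = sup{‖α_x(T) − T‖/ℓ(x) : x ≠ e}. Then ‖T‖~ ≤ r·L(T) for all T ∈ B, where ‖T‖~ = inf{‖T + tI‖ : t ∈ ℂ} is the quotient norm on B/ℂI and r = ∫_G ℓ(x) dx. -/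
/-!
The Haar average `A = ∫ α_x T dx` is `α`-invariant, hence a scalar by ergodicity, so
`‖T‖~ ≤ ‖T - A‖ ≤ ∫ ‖T - α_x T‖ dx ≤ L(T) ∫ ℓ`. Working in `ℝ≥0∞` throughout covers
`L(T) = ∞` and the degenerate case `∫ ℓ = 0` without case distinctions.
-/

open MeasureTheory

theorem StarAlgEquiv.continuous_of_cstarRing {B : Type*} [NormedRing B] [StarRing B]
    [CStarRing B] [NormedAlgebra ℂ B] [StarModule ℂ B] [CompleteSpace B]
    (φ : B ≃⋆ₐ[ℂ] B) : Continuous φ := by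
  let _ : CStarAlgebra B := {}
  exact (StarAlgEquiv.isometry φ).continuous

theorem map_integral_orbit_eq_self {G E 𝕜 : Type*} [Group G] [MeasurableSpace G]
    [MeasurableMul G] [RCLike 𝕜] [NormedAddCommGroup E] [NormedSpace ℝ E] [NormedSpace 𝕜 E]
    [CompleteSpace E]
    (μ : Measure G) [μ.IsMulLeftInvariant] (α : G → E →L[𝕜] E)
    (hhom : ∀ x y v, α (x * y) v = α x (α y v)) {v : E}
    (hint : Integrable (fun x => α x v) μ) (y : G) :
    α y (∫ x, α x v ∂μ) = ∫ x, α x v ∂μ := by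
  rw [← (α y).integral_comp_comm hint]
  simp_rw [← hhom]
  exact integral_mul_left_eq_self (fun x => α x v) y

theorem ENNReal.ofReal_le_iSup_div_mul {X : Type*} {a : X} {d ℓ : X → ℝ} (hda : d a = 0)
    (hℓ : ∀ x, x ≠ a → 0 < ℓ x) (x : X) :
    ENNReal.ofReal (d x) ≤
      (⨆ y : {y : X // y ≠ a}, ENNReal.ofReal (d y / ℓ y)) * ENNReal.ofReal (ℓ x) := by
  by_cases hx : x = a
  · simp [hx, hda]
  · have hℓx := hℓ x hx
    calc ENNReal.ofReal (d x) = ENNReal.ofReal (d x / ℓ x) * ENNReal.ofReal (ℓ x) := by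
          rw [← ENNReal.ofReal_mul' hℓx.le, div_mul_cancel₀ _ hℓx.ne']
      _ ≤ _ := by
          gcongr
          exact le_iSup (fun y : {y : X // y ≠ a} => ENNReal.ofReal (d y / ℓ y)) ⟨x, hx⟩

theorem enorm_sub_integral_le_lintegral {X E : Type*} [MeasurableSpace X]
    [NormedAddCommGroup E] [NormedSpace ℝ E] [CompleteSpace E]
    (μ : Measure X) [IsProbabilityMeasure μ] (v : E) {f : X → E} (hf : Integrable f μ) :
    ‖v - ∫ x, f x ∂μ‖ₑ ≤ ∫⁻ x, ‖v - f x‖ₑ ∂μ := by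
  have : v - ∫ x, f x ∂μ = ∫ x, (v - f x) ∂μ := by
    rw [integral_sub (integrable_const v) hf, integral_const, probReal_univ, one_smul]
  rw [this]
  exact enorm_integral_le_lintegral_enorm _

theorem stmt_14_general {G : Type*} [Group G] [TopologicalSpace G] [IsTopologicalGroup G]
    [CompactSpace G] [MeasurableSpace G] [BorelSpace G]
    (μ : Measure G) [μ.IsHaarMeasure] [IsProbabilityMeasure μ]
    (ℓ : G → ℝ) (hℓcont : Continuous ℓ) (hℓ0 : ∀ x, 0 ≤ ℓ x)
    (hℓe : ∀ x, ℓ x = 0 ↔ x = 1)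
    {B : Type*} [NormedRing B] [StarRing B] [CStarRing B] [NormedAlgebra ℂ B]
    [StarModule ℂ B] [CompleteSpace B]
    (α : G → B ≃⋆ₐ[ℂ] B)
    (hhom : ∀ x y (b : B), α (x * y) b = α x (α y b))
    (hcont : ∀ b : B, Continuous fun x => α x b)
    (hergodic : ∀ b : B, (∀ x : G, α x b = b) → ∃ c : ℂ, b = c • (1 : B))
    (T : B) :
    ENNReal.ofReal (sInf (Set.range fun t : ℂ => ‖T + t • (1 : B)‖))
      ≤ ENNReal.ofReal (∫ x, ℓ x ∂μ) *
          ⨆ x : {x : G // x ≠ 1}, ENNReal.ofReal (‖α x.1 T - T‖ / ℓ x.1) := by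
  set S := ⨆ x : {x : G // x ≠ 1}, ENNReal.ofReal (‖α x.1 T - T‖ / ℓ x.1)
  let α' : G → B →L[ℂ] B := fun x => ⟨(α x : B →ₗ[ℂ] B), (α x).continuous_of_cstarRing⟩
  have hint : Integrable (fun x => α x T) μ := (hcont T).integrable_of_hasCompactSupport
    (HasCompactSupport.of_compactSpace _)
  have hℓint : Integrable ℓ μ := hℓcont.integrable_of_hasCompactSupport
    (HasCompactSupport.of_compactSpace ℓ)
  obtain ⟨c, hc⟩ := hergodic (∫ x, α x T ∂μ)
    (map_integral_orbit_eq_self μ α' hhom hint)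
  have hT1 : α 1 T = T := (α 1).injective (by simpa using (hhom 1 1 T).symm)
  calc ENNReal.ofReal (sInf (Set.range fun t : ℂ => ‖T + t • (1 : B)‖))
      ≤ ENNReal.ofReal ‖T - ∫ x, α x T ∂μ‖ := by
        refine ENNReal.ofReal_le_ofReal (csInf_le ⟨0, ?_⟩ ⟨-c, ?_⟩)
        · rintro _ ⟨t, rfl⟩
          exact norm_nonneg _
        · simp [hc, sub_eq_add_neg]
    _ ≤ ∫⁻ x, ‖T - α x T‖ₑ ∂μ := by
        rw [ofReal_norm]
        exact enorm_sub_integral_le_lintegral μ T hint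
    _ ≤ ∫⁻ x, S * ENNReal.ofReal (ℓ x) ∂μ := by
        refine lintegral_mono fun x => ?_
        rw [enorm_sub_rev, ← ofReal_norm]
        exact ENNReal.ofReal_le_iSup_div_mul (d := fun x => ‖α x T - T‖) (by simp [hT1])
          (fun x hx => (hℓ0 x).lt_of_ne' (mt (hℓe x).1 hx)) x
    _ = ENNReal.ofReal (∫ x, ℓ x ∂μ) * S := by
        rw [lintegral_const_mul _ hℓcont.measurable.ennreal_ofReal,
          ofReal_integral_eq_lintegral_ofReal hℓint (.of_forall hℓ0), mul_comm]

/-- For an ergodic strongly continuous action `α` of a compact group `G`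
on a unital C*-algebra `B` and a continuous length function `ℓ`, the quotient norm on
`B/ℂ1` satisfies `‖T‖~ ≤ r·L(T)` with `r = ∫_G ℓ(x) dx` and
`L(T) = sup_{x ≠ e} ‖α_x T − T‖ / ℓ(x)`. -/
theorem stmt_14 {G : Type*} [Group G] [TopologicalSpace G] [IsTopologicalGroup G]
    [CompactSpace G] [MeasurableSpace G] [BorelSpace G]
    (μ : Measure G) [μ.IsHaarMeasure] [IsProbabilityMeasure μ]
    (ℓ : G → ℝ) (hℓcont : Continuous ℓ) (hℓ0 : ∀ x, 0 ≤ ℓ x)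
    (hℓe : ∀ x, ℓ x = 0 ↔ x = 1) (hℓinv : ∀ x, ℓ x⁻¹ = ℓ x)
    (hℓsub : ∀ x y, ℓ (x * y) ≤ ℓ x + ℓ y)
    {B : Type*} [NormedRing B] [StarRing B] [CStarRing B] [NormedAlgebra ℂ B]
    [StarModule ℂ B] [CompleteSpace B]
    (α : G → B ≃⋆ₐ[ℂ] B)
    (hhom : ∀ x y (b : B), α (x * y) b = α x (α y b))
    (hcont : ∀ b : B, Continuous fun x => α x b)
    (hergodic : ∀ b : B, (∀ x : G, α x b = b) → ∃ c : ℂ, b = c • (1 : B))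
    (T : B) :
    ENNReal.ofReal (sInf (Set.range fun t : ℂ => ‖T + t • (1 : B)‖))
      ≤ ENNReal.ofReal (∫ x, ℓ x ∂μ) *
          ⨆ x : {x : G // x ≠ 1}, ENNReal.ofReal (‖α x.1 T - T‖ / ℓ x.1) :=
  stmt_14_general μ ℓ hℓcont hℓ0 hℓe α hhom hcont hergodic T
end

section
/- Let A and B be order-unit spaces (or unital C*-algebras) with Lip-norms L_A and L_B, let σ : B → A be a positive unital linear map, and let γ > 0. Define L on A ⊕ B by L(f,T) = max(L_A(f), L_B(T), γ⁻¹‖f − σ(T)‖). Suppose the quotient of L on A equals L_A. Then for every state μ of A, the state ν = μ ∘ σ of B satisfies ρ_L(μ, ν) ≤ γ, where ρ_L(μ,ν) = sup{|μ(f) − ν(T)| : L(f,T) ≤ 1}. Hence S(A) lies in the γ-neighborhood of S(B) for the metric ρ_L. -/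
/-!
Only the bridge term of `L` matters: `γ⁻¹‖f − σ T‖ ≤ 1` says `‖f − σ T‖ ≤ γ`, and a state is
norm-contractive. The latter is Cauchy–Schwarz for the GNS form `⟪x, y⟫ = μ (x⋆ y)`:
`|μ a|² ≤ μ 1 · μ (a⋆ a) ≤ ‖a⋆ a‖ = ‖a‖²`.
-/

open scoped ComplexOrder

namespace PositiveLinearMap

variable {A : Type*} [CStarAlgebra A] [PartialOrder A] [StarOrderedRing A]

theorem norm_apply_sq_le (f : A →ₚ[ℂ] ℂ) (a : A) :
    ‖f a‖ ^ 2 ≤ ‖f 1‖ * ‖f (star a * a)‖ := by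
  have hnorm_sq (x : A) : ‖f.toPreGNS x‖ ^ 2 = ‖f (star x * x)‖ := by
    rw [← f.ofPreGNS_toPreGNS x, ← f.preGNS_norm_sq, f.ofPreGNS_toPreGNS]
    norm_cast
    rw [Real.norm_of_nonneg (by positivity)]
  have hcs := norm_inner_le_norm (𝕜 := ℂ) (f.toPreGNS 1) (f.toPreGNS a)
  rw [preGNS_inner_def, ofPreGNS_toPreGNS, ofPreGNS_toPreGNS, star_one, one_mul] at hcs
  calc ‖f a‖ ^ 2 ≤ (‖f.toPreGNS 1‖ * ‖f.toPreGNS a‖) ^ 2 := by gcongr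
    _ = ‖f 1‖ * ‖f (star a * a)‖ := by rw [mul_pow, hnorm_sq, hnorm_sq, star_one, one_mul]

theorem norm_apply_le (f : A →ₚ[ℂ] ℂ) (a : A) : ‖f a‖ ≤ ‖f 1‖ * ‖a‖ := by
  refine le_of_sq_le_sq ?_ (by positivity)
  calc ‖f a‖ ^ 2 ≤ ‖f 1‖ * ‖f (star a * a)‖ := f.norm_apply_sq_le a
    _ ≤ ‖f 1‖ * (‖f 1‖ * ‖star a * a‖) := by
      gcongr; exact f.norm_apply_le_of_nonneg _ (star_mul_self_nonneg a)
    _ = (‖f 1‖ * ‖a‖) ^ 2 := by rw [CStarRing.norm_star_mul_self]; ring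

end PositiveLinearMap

theorem LinearMap.norm_apply_le_of_map_star_mul_self_nonneg {A : Type*} [CStarAlgebra A]
    (μ : A →ₗ[ℂ] ℂ) (hμ1 : μ 1 = 1) (hμpos : ∀ a, 0 ≤ μ (star a * a)) (a : A) :
    ‖μ a‖ ≤ ‖a‖ := by
  let _ := CStarAlgebra.spectralOrder A
  have := CStarAlgebra.spectralOrderedRing A
  let f : A →ₚ[ℂ] ℂ := .mk₀ μ fun x hx ↦ by
    obtain ⟨b, rfl⟩ := CStarAlgebra.nonneg_iff_eq_star_mul_self.mp hx
    exact hμpos b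
  have h : ‖μ a‖ ≤ ‖μ 1‖ * ‖a‖ := f.norm_apply_le a
  rwa [hμ1, norm_one, one_mul] at h

theorem stmt_17_general {A : Type*} [NormedRing A] [StarRing A] [CStarRing A] [NormedAlgebra ℂ A]
    [StarModule ℂ A] [CompleteSpace A]
    {B : Type*} [NormedRing B] [NormedAlgebra ℂ B]
    (LA : A → ℝ) (LB : B → ℝ)
    (σ : B →ₗ[ℂ] A)
    (γ : ℝ) (hγ : 0 < γ)
    (μ : A →ₗ[ℂ] ℂ) (hμ1 : μ 1 = 1)
    (hμpos : ∀ a : A, 0 ≤ (μ (star a * a)).re ∧ (μ (star a * a)).im = 0)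
    (f : A) (T : B)
    (hLT : max (LA f) (max (LB T) (γ⁻¹ * ‖f - σ T‖)) ≤ 1) :
    ‖μ f - μ (σ T)‖ ≤ γ := by
  let _ : CStarAlgebra A := {}
  have hdist : ‖f - σ T‖ ≤ γ := by
    rw [← inv_mul_le_one₀ hγ]
    exact (le_max_right _ _).trans (le_max_right _ _) |>.trans hLT
  calc ‖μ f - μ (σ T)‖ = ‖μ (f - σ T)‖ := by rw [map_sub]
    _ ≤ ‖f - σ T‖ := μ.norm_apply_le_of_map_star_mul_self_nonneg hμ1
        (fun a ↦ Complex.nonneg_iff.mpr ⟨(hμpos a).1, (hμpos a).2.symm⟩) _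
    _ ≤ γ := hdist

/-- Let `σ : B → A` be a positive unital linear map between unital
C*-algebras carrying Lip-norms `L_A`, `L_B`, let `γ > 0`, and let
`L(f,T) = max(L_A f, L_B T, γ⁻¹‖f − σ T‖)` be the bridge seminorm; assume the quotient of
`L` on `A` is `L_A`. Then for every state `μ` of `A`, the state `ν = μ ∘ σ` of `B`
satisfies `ρ_L(μ,ν) ≤ γ`: whenever `L(f,T) ≤ 1`, `|μ(f) − ν(T)| ≤ γ`. Hence `S(A)` lies
in the `γ`-neighborhood of `S(B)`. -/
theorem stmt_17 {A : Type*} [NormedRing A] [StarRing A] [CStarRing A] [NormedAlgebra ℂ A]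
    [StarModule ℂ A] [CompleteSpace A]
    {B : Type*} [NormedRing B] [StarRing B] [CStarRing B] [NormedAlgebra ℂ B]
    [StarModule ℂ B] [CompleteSpace B]
    (LA : A → ℝ) (LB : B → ℝ)
    (σ : B →ₗ[ℂ] A) (hσ1 : σ 1 = 1)
    (hσpos : ∀ b : B, (∃ c : B, b = star c * c) → ∃ a : A, σ b = star a * a)
    (γ : ℝ) (hγ : 0 < γ)
    (hquot : ∀ f : A,
      sInf (Set.range fun T : B => max (LA f) (max (LB T) (γ⁻¹ * ‖f - σ T‖))) = LA f)
    (μ : A →ₗ[ℂ] ℂ) (hμ1 : μ 1 = 1)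
    (hμpos : ∀ a : A, 0 ≤ (μ (star a * a)).re ∧ (μ (star a * a)).im = 0)
    (f : A) (T : B)
    (hLT : max (LA f) (max (LB T) (γ⁻¹ * ‖f - σ T‖)) ≤ 1) :
    ‖μ f - μ (σ T)‖ ≤ γ :=
  stmt_17_general LA LB σ γ hγ μ hμ1 hμpos f T hLT
end

section
/- Let k ≥ 1 and let X₁,...,X_k be operators on H with ‖X_j‖ ≤ K and let ξ be a unit vector. For n > k, consider T_n = n^{−k}⟨U^{(n)}_{X_1}···U^{(n)}_{X_k} ξ^{⊗n}, ξ^{⊗n}⟩ where U^{(n)}_X = Σ_{i=1}^n 1⊗···⊗X⊗···⊗1. Then |T_n − Π_{j=1}^k ⟨X_j ξ, ξ⟩| ≤ n^{−k}·2·p(n)·max(1,K)^k, where p(n) = n^k − n(n−1)···(n−k+1) is a polynomial in n of degree k−1. In particular T_n → Π_j ⟨X_j ξ, ξ⟩ as n → ∞. -/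
open Filter

/-- The matrix of `U^{(n)}_X = Σ_{i=1}^n 1⊗···⊗X⊗···⊗1` on the `n`-fold tensor power,
realized on the function basis indexed by `Fin n → ι`. -/
noncomputable def slotSum {ι : Type*} [Fintype ι] [DecidableEq ι]
    (M : Matrix ι ι ℂ) (n : ℕ) : Matrix (Fin n → ι) (Fin n → ι) ℂ :=
  fun p q => ∑ k : Fin n,
    M (p k) (q k) * ∏ j ∈ Finset.univ.erase k, (if p j = q j then (1 : ℂ) else 0)

/-- The `n`-fold elementary tensor `v^{⊗n}`, realized in the function model. -/
noncomputable def tensorVec {ι : Type*} [Fintype ι] (v : EuclideanSpace ℂ ι) (n : ℕ) :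
    EuclideanSpace ℂ (Fin n → ι) :=
  (WithLp.equiv 2 ((Fin n → ι) → ℂ)).symm fun p => ∏ k, v (p k)

/-- `T_n = n^{−k} ⟨U^{(n)}_{X_1} ⋯ U^{(n)}_{X_k} ξ^{⊗n}, ξ^{⊗n}⟩`. -/
noncomputable def Tseq {ι : Type*} [Fintype ι] [DecidableEq ι] {k : ℕ}
    (M : Fin k → Matrix ι ι ℂ) (v : EuclideanSpace ℂ ι) (n : ℕ) : ℂ :=
  (n : ℂ) ^ (-(k : ℤ)) *
    inner ℂ ((List.ofFn fun j => Matrix.toEuclideanCLM (𝕜 := ℂ) (slotSum (M j) n)).prod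
      (tensorVec v n)) (tensorVec v n)

/-!
Expanding every `U^{(n)}_{X_j} = ∑_i (X_j in slot i)` writes `n^k T_n` as a sum over the slot
assignments `f : Fin k → Fin n`. Slot operators map elementary tensors to elementary tensors, so
the term of `f` is `∏_i ⟨A_i ξ, ξ⟩`, where `A_i` is the ordered product of the `X_j` placed in
slot `i`. It is at most `∏_j ‖X_j‖` in absolute value, and it equals `∏_j ⟨X_j ξ, ξ⟩` when `f` is
injective, because `‖ξ‖ = 1`. Hence only the `n^k - n(n-1)⋯(n-k+1)` non-injective assignments
contribute to the error, each by at most `2 max(1,K)^k`.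
-/

open Finset Function Matrix
open scoped InnerProductSpace

lemma List.prod_ofFn_sum {A κ : Type*} [Semiring A] [Fintype κ] {k : ℕ} (g : Fin k → κ → A) :
    (List.ofFn fun j => ∑ i, g j i).prod = ∑ f : Fin k → κ, (List.ofFn fun j => g j (f j)).prod :=
  (MultilinearMap.mkPiAlgebraFin ℕ k A).map_sum g

lemma card_filter_not_injective (k n : ℕ) :
    #{f : Fin k → Fin n | ¬ Injective f} = n ^ k - n.descFactorial k := by
  have hinj : #{f : Fin k → Fin n | Injective f} = n.descFactorial k := by
    rw [← Fintype.card_subtype, Fintype.card_congr (Equiv.subtypeInjectiveEquivEmbedding _ _),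
      Fintype.card_embedding_eq, Fintype.card_fin, Fintype.card_fin]
  have htotal := card_filter_add_card_filter_not (s := univ) (fun f : Fin k → Fin n => Injective f)
  rw [card_univ, Fintype.card_fun, Fintype.card_fin, Fintype.card_fin, hinj] at htotal
  omega

lemma Nat.cast_descFactorial_eq_prod_range {R : Type*} [CommRing R] {n k : ℕ} (h : k ≤ n) :
    (n.descFactorial k : R) = ∏ i ∈ range k, ((n : R) - i) := by
  rw [Nat.descFactorial_eq_prod_range, Nat.cast_prod]
  exact prod_congr rfl fun i hi => Nat.cast_sub (by have := mem_range.1 hi; omega)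

lemma tendsto_pow_sub_prod_range_mul_div_pow (k : ℕ) (C : ℝ) :
    Tendsto (fun n : ℕ => ((n : ℝ) ^ k - ∏ i ∈ range k, ((n : ℝ) - i)) * C / (n : ℝ) ^ k)
      atTop (nhds 0) := by
  have hprod : Tendsto (fun n : ℕ => ∏ i ∈ range k, (1 - (i : ℝ) / n)) atTop (nhds 1) := by
    simpa using tendsto_finsetProd (range k) fun i _ =>
      (tendsto_const_div_atTop_nhds_zero_nat (i : ℝ)).const_sub (1 : ℝ)
  have hlim : Tendsto (fun n : ℕ => (1 - ∏ i ∈ range k, (1 - (i : ℝ) / n)) * C) atTop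
      (nhds 0) := by
    simpa using (hprod.const_sub 1).mul_const C
  refine hlim.congr' ((eventually_ne_atTop 0).mono fun n hn => ?_)
  have hn : (n : ℝ) ≠ 0 := Nat.cast_ne_zero.2 hn
  rw [prod_congr rfl fun i _ => one_sub_div hn, prod_div_distrib, prod_const, card_range]
  field_simp

section PureTensor

variable {ι : Type*} [Fintype ι] {n : ℕ}

noncomputable def pureTensor (w : Fin n → EuclideanSpace ℂ ι) : EuclideanSpace ℂ (Fin n → ι) :=
  (WithLp.equiv 2 ((Fin n → ι) → ℂ)).symm fun p => ∏ k, w k (p k)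

lemma tensorVec_eq_pureTensor (v : EuclideanSpace ℂ ι) :
    tensorVec v n = pureTensor fun _ => v :=
  rfl

lemma inner_pureTensor (w u : Fin n → EuclideanSpace ℂ ι) :
    ⟪pureTensor w, pureTensor u⟫_ℂ = ∏ k, ⟪w k, u k⟫_ℂ := by
  simp only [PiLp.inner_apply, prod_univ_sum, Fintype.piFinset_univ]
  refine sum_congr rfl fun p _ => ?_
  simp [pureTensor, prod_mul_distrib]

end PureTensor

section SlotOperators

variable {ι : Type*} [Fintype ι] [DecidableEq ι] {n : ℕ}

noncomputable def slotMatrix (M : Matrix ι ι ℂ) (i : Fin n) :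
    Matrix (Fin n → ι) (Fin n → ι) ℂ :=
  fun p q => M (p i) (q i) * ∏ j ∈ univ.erase i, if p j = q j then (1 : ℂ) else 0

lemma slotSum_eq_sum_slotMatrix (M : Matrix ι ι ℂ) (n : ℕ) :
    slotSum M n = ∑ i : Fin n, slotMatrix M i := by
  ext p q
  simp [slotSum, slotMatrix, Matrix.sum_apply]

lemma slotMatrix_apply_eq_sum (M : Matrix ι ι ℂ) (i : Fin n) (p q : Fin n → ι) :
    slotMatrix M i p q = ∑ a, if q = update p i a then M (p i) a else 0 := by
  by_cases h : ∀ j ≠ i, p j = q j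
  · have hq : q = update p i (q i) := by
      ext j
      rcases eq_or_ne j i with rfl | hj
      · simp
      · simp [hj, h j hj]
    rw [sum_eq_single (q i)]
    · rw [if_pos hq, slotMatrix, prod_eq_one, mul_one]
      intro j hj
      simp [h j (ne_of_mem_erase hj)]
    · intro a _ ha
      rw [if_neg]
      intro hqa
      exact ha (by simpa using (congrFun hqa i).symm)
    · simp
  · push Not at h
    obtain ⟨j, hji, hpq⟩ := h
    rw [sum_eq_zero, slotMatrix, prod_eq_zero (mem_erase.2 ⟨hji, mem_univ j⟩) (if_neg hpq),
      mul_zero]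
    intro a _
    rw [if_neg]
    rintro rfl
    simp [hji] at hpq

lemma slotMatrix_mulVec_apply (M : Matrix ι ι ℂ) (i : Fin n) (y : (Fin n → ι) → ℂ)
    (p : Fin n → ι) :
    (slotMatrix M i *ᵥ y) p = ∑ a, M (p i) a * y (update p i a) := by
  simp only [mulVec, dotProduct, slotMatrix_apply_eq_sum, sum_mul]
  rw [sum_comm]
  simp [ite_mul]

lemma toEuclideanCLM_slotMatrix_pureTensor (M : Matrix ι ι ℂ) (i : Fin n)
    (w : Fin n → EuclideanSpace ℂ ι) :
    toEuclideanCLM (𝕜 := ℂ) (slotMatrix M i) (pureTensor w)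
      = pureTensor (update w i (toEuclideanCLM (𝕜 := ℂ) M (w i))) := by
  ext p
  have hin : ∀ a, ∏ k, w k (update p i a k) = w i a * ∏ k ∈ univ \ {i}, w k (p k) := by
    intro a
    simp_rw [apply_update (fun k c => w k c), prod_update_of_mem (mem_univ i)]
  have hout : ∏ k, update w i (toEuclideanCLM (𝕜 := ℂ) M (w i)) k (p k)
      = toEuclideanCLM (𝕜 := ℂ) M (w i) (p i) * ∏ k ∈ univ \ {i}, w k (p k) := by
    simp_rw [apply_update (fun k (u : EuclideanSpace ℂ ι) => u (p k)),
      prod_update_of_mem (mem_univ i)]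
  change (slotMatrix M i *ᵥ fun p => ∏ k, w k (p k)) p
    = ∏ k, update w i (toEuclideanCLM (𝕜 := ℂ) M (w i)) k (p k)
  rw [slotMatrix_mulVec_apply, hout, ofLp_toEuclideanCLM, mulVec, dotProduct, sum_mul]
  simp_rw [hin, mul_assoc]

-- `List.foldr` acts with the last pair first, as the operator product `(L.map _).prod` does.
noncomputable def applySlots (L : List (Matrix ι ι ℂ × Fin n)) (w : Fin n → EuclideanSpace ℂ ι) :
    Fin n → EuclideanSpace ℂ ι :=
  L.foldr (fun Xi u => update u Xi.2 (toEuclideanCLM (𝕜 := ℂ) Xi.1 (u Xi.2))) w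

lemma applySlots_cons (Xi : Matrix ι ι ℂ × Fin n) (L : List (Matrix ι ι ℂ × Fin n))
    (w : Fin n → EuclideanSpace ℂ ι) :
    applySlots (Xi :: L) w
      = update (applySlots L w) Xi.2 (toEuclideanCLM (𝕜 := ℂ) Xi.1 (applySlots L w Xi.2)) :=
  rfl

lemma list_prod_slotMatrix_pureTensor (L : List (Matrix ι ι ℂ × Fin n))
    (w : Fin n → EuclideanSpace ℂ ι) :
    (L.map fun Xi => toEuclideanCLM (𝕜 := ℂ) (slotMatrix Xi.1 Xi.2)).prod (pureTensor w)
      = pureTensor (applySlots L w) := by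
  induction L with
  | nil => rfl
  | cons Xi L ih =>
    rw [List.map_cons, List.prod_cons, mul_apply_eq_comp, ih,
      toEuclideanCLM_slotMatrix_pureTensor, applySlots_cons]

lemma applySlots_of_notMem {L : List (Matrix ι ι ℂ × Fin n)} {i : Fin n}
    (hi : i ∉ L.map Prod.snd) (w : Fin n → EuclideanSpace ℂ ι) : applySlots L w i = w i := by
  induction L with
  | nil => rfl
  | cons Xi L ih =>
    simp only [List.map_cons, List.mem_cons, not_or] at hi
    rw [applySlots_cons, update_of_ne hi.1, ih hi.2]

lemma applySlots_of_mem {L : List (Matrix ι ι ℂ × Fin n)} (hL : (L.map Prod.snd).Nodup)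
    {Xi : Matrix ι ι ℂ × Fin n} (hXi : Xi ∈ L) (w : Fin n → EuclideanSpace ℂ ι) :
    applySlots L w Xi.2 = toEuclideanCLM (𝕜 := ℂ) Xi.1 (w Xi.2) := by
  induction L with
  | nil => simp at hXi
  | cons Yj L ih =>
    rw [List.map_cons, List.nodup_cons] at hL
    rw [applySlots_cons]
    rcases List.mem_cons.1 hXi with rfl | hmem
    · rw [update_self, applySlots_of_notMem hL.1]
    · have hne : Xi.2 ≠ Yj.2 := fun h => hL.1 (h ▸ List.mem_map_of_mem hmem)
      rw [update_of_ne hne, ih hL.2 hmem]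

lemma prod_norm_applySlots_le (L : List (Matrix ι ι ℂ × Fin n))
    (w : Fin n → EuclideanSpace ℂ ι) :
    ∏ i, ‖applySlots L w i‖
      ≤ (L.map fun Xi => ‖toEuclideanCLM (n := ι) (𝕜 := ℂ) Xi.1‖).prod * ∏ i, ‖w i‖ := by
  induction L with
  | nil => simp [applySlots]
  | cons Xi L ih =>
    set u := applySlots L w
    have hupd : ∏ i, ‖update u Xi.2 (toEuclideanCLM (𝕜 := ℂ) Xi.1 (u Xi.2)) i‖
        ≤ ‖toEuclideanCLM (𝕜 := ℂ) Xi.1‖ * ∏ i, ‖u i‖ := by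
      simp_rw [apply_update (fun _ x => ‖x‖), prod_update_of_mem (mem_univ Xi.2),
        ← mul_prod_erase univ (fun i => ‖u i‖) (mem_univ Xi.2), ← mul_assoc,
        sdiff_singleton_eq_erase]
      gcongr
      exact (toEuclideanCLM (𝕜 := ℂ) Xi.1).le_opNorm _
    rw [applySlots_cons, List.map_cons, List.prod_cons, mul_assoc]
    exact hupd.trans (mul_le_mul_of_nonneg_left ih (norm_nonneg _))

end SlotOperators

section SlotExpansion

variable {ι : Type*} [Fintype ι] [DecidableEq ι] {n k : ℕ}

noncomputable def slotCoeff (M : Fin k → Matrix ι ι ℂ) (v : EuclideanSpace ℂ ι)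
    (f : Fin k → Fin n) : ℂ :=
  ⟪(List.ofFn fun j => toEuclideanCLM (𝕜 := ℂ) (slotMatrix (M j) (f j))).prod (tensorVec v n),
    tensorVec v n⟫_ℂ

lemma Tseq_eq_sum_slotCoeff (M : Fin k → Matrix ι ι ℂ) (v : EuclideanSpace ℂ ι) :
    Tseq M v n = ((n : ℂ) ^ k)⁻¹ * ∑ f : Fin k → Fin n, slotCoeff M v f := by
  simp_rw [Tseq, _root_.zpow_neg, zpow_natCast, slotSum_eq_sum_slotMatrix, map_sum,
    List.prod_ofFn_sum, _root_.sum_apply, sum_inner]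
  rfl

lemma slotCoeff_eq_prod_inner (M : Fin k → Matrix ι ι ℂ) (v : EuclideanSpace ℂ ι)
    (f : Fin k → Fin n) :
    slotCoeff M v f = ∏ i, ⟪applySlots (List.ofFn fun j => (M j, f j)) (fun _ => v) i, v⟫_ℂ := by
  have hL : (List.ofFn fun j => toEuclideanCLM (𝕜 := ℂ) (slotMatrix (M j) (f j)))
      = (List.ofFn fun j => (M j, f j)).map
          fun Xi => toEuclideanCLM (𝕜 := ℂ) (slotMatrix Xi.1 Xi.2) := by
    rw [List.map_ofFn]
    rfl
  rw [slotCoeff, hL, tensorVec_eq_pureTensor, list_prod_slotMatrix_pureTensor, inner_pureTensor]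

lemma slotCoeff_of_injective (M : Fin k → Matrix ι ι ℂ) {v : EuclideanSpace ℂ ι} (hv : ‖v‖ = 1)
    {f : Fin k → Fin n} (hf : Injective f) :
    slotCoeff M v f = ∏ j, ⟪toEuclideanCLM (𝕜 := ℂ) (M j) v, v⟫_ℂ := by
  set L := List.ofFn fun j => (M j, f j)
  have hslots : L.map Prod.snd = List.ofFn f := by
    rw [List.map_ofFn]
    rfl
  have hvv : ⟪v, v⟫_ℂ = 1 := by
    rw [inner_self_eq_norm_sq_to_K, hv]
    norm_num
  have hidle : ∀ i ∉ univ.image f, ⟪applySlots L (fun _ => v) i, v⟫_ℂ = 1 := by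
    intro i hi
    rw [applySlots_of_notMem, hvv]
    simpa [hslots, List.mem_ofFn] using hi
  rw [slotCoeff_eq_prod_inner, ← prod_subset (subset_univ _) fun i _ hi => hidle i hi,
    prod_image fun a _ b _ h => hf h]
  refine prod_congr rfl fun j _ => ?_
  rw [applySlots_of_mem (Xi := (M j, f j)) (by rw [hslots]; exact List.nodup_ofFn.2 hf)
    (List.mem_ofFn.2 ⟨j, rfl⟩)]

lemma norm_slotCoeff_le (M : Fin k → Matrix ι ι ℂ) {v : EuclideanSpace ℂ ι} (hv : ‖v‖ = 1)
    (f : Fin k → Fin n) :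
    ‖slotCoeff M v f‖ ≤ ∏ j, ‖toEuclideanCLM (n := ι) (𝕜 := ℂ) (M j)‖ := by
  set L := List.ofFn fun j => (M j, f j)
  calc ‖slotCoeff M v f‖ = ∏ i, ‖⟪applySlots L (fun _ => v) i, v⟫_ℂ‖ := by
        rw [slotCoeff_eq_prod_inner, norm_prod]
    _ ≤ ∏ i, ‖applySlots L (fun _ => v) i‖ :=
        prod_le_prod (fun _ _ => norm_nonneg _) fun i _ =>
          (norm_inner_le_norm _ _).trans_eq (by rw [hv, mul_one])
    _ ≤ (L.map fun Xi => ‖toEuclideanCLM (n := ι) (𝕜 := ℂ) Xi.1‖).prod * ∏ _i : Fin n, ‖v‖ :=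
        prod_norm_applySlots_le L _
    _ = ∏ j, ‖toEuclideanCLM (n := ι) (𝕜 := ℂ) (M j)‖ := by
        rw [List.map_ofFn, List.prod_ofFn, hv, prod_const_one, mul_one]
        rfl

lemma norm_prod_inner_le (M : Fin k → Matrix ι ι ℂ) {v : EuclideanSpace ℂ ι} (hv : ‖v‖ = 1) :
    ‖∏ j, ⟪toEuclideanCLM (𝕜 := ℂ) (M j) v, v⟫_ℂ‖
      ≤ ∏ j, ‖toEuclideanCLM (n := ι) (𝕜 := ℂ) (M j)‖ := by
  rw [norm_prod]
  refine prod_le_prod (fun _ _ => norm_nonneg _) fun j _ => ?_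
  calc ‖⟪toEuclideanCLM (𝕜 := ℂ) (M j) v, v⟫_ℂ‖ ≤ ‖toEuclideanCLM (𝕜 := ℂ) (M j) v‖ * ‖v‖ :=
        norm_inner_le_norm _ _
    _ ≤ ‖toEuclideanCLM (n := ι) (𝕜 := ℂ) (M j)‖ := by
        simpa [hv] using (toEuclideanCLM (𝕜 := ℂ) (M j)).le_opNorm v

lemma norm_sum_slotCoeff_sub_le (M : Fin k → Matrix ι ι ℂ) {v : EuclideanSpace ℂ ι}
    (hv : ‖v‖ = 1) :
    ‖∑ f : Fin k → Fin n, slotCoeff M v f - n ^ k * ∏ j, ⟪toEuclideanCLM (𝕜 := ℂ) (M j) v, v⟫_ℂ‖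
      ≤ (n ^ k - n.descFactorial k : ℕ) * (2 * ∏ j, ‖toEuclideanCLM (n := ι) (𝕜 := ℂ) (M j)‖) := by
  set P := ∏ j, ⟪toEuclideanCLM (𝕜 := ℂ) (M j) v, v⟫_ℂ
  set B := ∏ j, ‖toEuclideanCLM (n := ι) (𝕜 := ℂ) (M j)‖
  have hsum : ∑ f : Fin k → Fin n, slotCoeff M v f - n ^ k * P
      = ∑ f : Fin k → Fin n with ¬ Injective f, (slotCoeff M v f - P) :=
    calc ∑ f : Fin k → Fin n, slotCoeff M v f - n ^ k * P
        = ∑ f : Fin k → Fin n, (slotCoeff M v f - P) := by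
          rw [sum_sub_distrib, sum_const, card_univ, Fintype.card_fun, Fintype.card_fin,
            Fintype.card_fin, nsmul_eq_mul, Nat.cast_pow]
      _ = _ := by
          rw [← sum_filter_add_sum_filter_not univ Injective, add_eq_right]
          exact sum_eq_zero fun f hf =>
            sub_eq_zero.2 (slotCoeff_of_injective M hv (mem_filter.1 hf).2)
  have hterm : ∀ f : Fin k → Fin n, ‖slotCoeff M v f - P‖ ≤ 2 * B := fun f =>
    calc ‖slotCoeff M v f - P‖ ≤ ‖slotCoeff M v f‖ + ‖P‖ := norm_sub_le _ _
      _ ≤ B + B := add_le_add (norm_slotCoeff_le M hv f) (norm_prod_inner_le M hv)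
      _ = 2 * B := by ring
  rw [hsum, ← card_filter_not_injective]
  exact (norm_sum_le _ _).trans (by simpa using sum_le_card_nsmul _ _ _ fun f _ => hterm f)

lemma norm_Tseq_sub_prod_inner_le (M : Fin k → Matrix ι ι ℂ) {K : ℝ}
    (hK : ∀ j, ‖toEuclideanCLM (n := ι) (𝕜 := ℂ) (M j)‖ ≤ K) {v : EuclideanSpace ℂ ι}
    (hv : ‖v‖ = 1) (hn : k < n) :
    ‖Tseq M v n - ∏ j, ⟪toEuclideanCLM (𝕜 := ℂ) (M j) v, v⟫_ℂ‖
      ≤ (((n : ℝ) ^ k - ∏ i ∈ range k, ((n : ℝ) - i)) * 2 * max 1 K ^ k) / (n : ℝ) ^ k := by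
  set P := ∏ j, ⟪toEuclideanCLM (𝕜 := ℂ) (M j) v, v⟫_ℂ
  have hnk : (n : ℂ) ^ k ≠ 0 := pow_ne_zero _ (Nat.cast_ne_zero.2 (by omega))
  have hdiff : Tseq M v n - P = (∑ f : Fin k → Fin n, slotCoeff M v f - n ^ k * P) / n ^ k := by
    rw [Tseq_eq_sum_slotCoeff]
    field_simp
  have hcount : ((n ^ k - n.descFactorial k : ℕ) : ℝ)
      = (n : ℝ) ^ k - ∏ i ∈ range k, ((n : ℝ) - i) := by
    rw [Nat.cast_sub (Nat.descFactorial_le_pow n k), Nat.cast_pow,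
      Nat.cast_descFactorial_eq_prod_range hn.le]
  have hB : ∏ j, ‖toEuclideanCLM (n := ι) (𝕜 := ℂ) (M j)‖ ≤ max 1 K ^ k := by
    calc ∏ j, ‖toEuclideanCLM (n := ι) (𝕜 := ℂ) (M j)‖ ≤ ∏ _j : Fin k, max 1 K :=
          prod_le_prod (fun j _ => norm_nonneg _) fun j _ => (hK j).trans (le_max_right 1 K)
      _ = max 1 K ^ k := by simp
  rw [hdiff, norm_div, norm_pow, Complex.norm_natCast, mul_assoc, ← hcount]
  gcongr
  exact (norm_sum_slotCoeff_sub_le M hv).trans (by gcongr)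

end SlotExpansion

theorem stmt_19_general {ι : Type*} [Fintype ι] [DecidableEq ι]
    (k : ℕ) (M : Fin k → Matrix ι ι ℂ) (K : ℝ)
    (hK : ∀ j, ‖Matrix.toEuclideanCLM (𝕜 := ℂ) (M j)‖ ≤ K)
    (v : EuclideanSpace ℂ ι) (hv : ‖v‖ = 1) :
    (∀ n : ℕ, k < n →
      ‖Tseq M v n - ∏ j, (inner ℂ (Matrix.toEuclideanCLM (𝕜 := ℂ) (M j) v) v : ℂ)‖
        ≤ (((n : ℝ) ^ k - ∏ i ∈ Finset.range k, ((n : ℝ) - i)) * 2 * max 1 K ^ k)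
            / (n : ℝ) ^ k) ∧
    Tendsto (fun n : ℕ => Tseq M v n) atTop
      (nhds (∏ j, (inner ℂ (Matrix.toEuclideanCLM (𝕜 := ℂ) (M j) v) v : ℂ))) := by
  have hbound := fun n (hn : k < n) => norm_Tseq_sub_prod_inner_le M hK hv hn
  refine ⟨hbound, tendsto_iff_norm_sub_tendsto_zero.2 <| squeeze_zero'
    (Eventually.of_forall fun _ => norm_nonneg _) ((eventually_gt_atTop k).mono hbound) ?_⟩
  simpa only [mul_assoc] using tendsto_pow_sub_prod_range_mul_div_pow k (2 * max 1 K ^ k)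

/-- The core estimate for the convergence of Berezin covariant symbols:
for operators `X_1, …, X_k` of norm at most `K` and a unit vector `ξ`, with
`T_n = n^{−k}⟨U^{(n)}_{X_1}⋯U^{(n)}_{X_k} ξ^{⊗n}, ξ^{⊗n}⟩` one has
`|T_n − Π_j ⟨X_j ξ, ξ⟩| ≤ n^{−k}·2·p(n)·max(1,K)^k` for `n > k`, where
`p(n) = n^k − n(n−1)⋯(n−k+1)`; in particular `T_n → Π_j ⟨X_j ξ, ξ⟩`. -/
theorem stmt_19 {ι : Type*} [Fintype ι] [DecidableEq ι]
    (k : ℕ) (hk : 0 < k) (M : Fin k → Matrix ι ι ℂ) (K : ℝ)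
    (hK : ∀ j, ‖Matrix.toEuclideanCLM (𝕜 := ℂ) (M j)‖ ≤ K)
    (v : EuclideanSpace ℂ ι) (hv : ‖v‖ = 1) :
    (∀ n : ℕ, k < n →
      ‖Tseq M v n - ∏ j, (inner ℂ (Matrix.toEuclideanCLM (𝕜 := ℂ) (M j) v) v : ℂ)‖
        ≤ (((n : ℝ) ^ k - ∏ i ∈ Finset.range k, ((n : ℝ) - i)) * 2 * max 1 K ^ k)
            / (n : ℝ) ^ k) ∧
    Tendsto (fun n : ℕ => Tseq M v n) atTop
      (nhds (∏ j, (inner ℂ (Matrix.toEuclideanCLM (𝕜 := ℂ) (M j) v) v : ℂ))) :=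
  stmt_19_general k M K hK v hv
end
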